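/- Let H be a complex Hilbert space and T : H → H an additive bijection that commutes with every bounded linear operator on H (TX = XT for all X ∈ B(H)). Then T = λ·id for some nonzero complex scalar λ. -/

import Mathlib

/-!
Commuting with the scalar operators `c • id` makes `T` homogeneous. Fix `e ≠ 0` and a
continuous functional `f` with `f e ≠ 0`. Commuting with the rank-one operator `x ↦ f x • w` sends
`e` to `T (f e • w) = f e • T w` on one side and to `f (T e) • w` on the other, so `T w = l • w`
with `l = f (T e) / f e` independent of `w`. Injectivity of `T` then rules out `l = 0`.
-/

section CommuteWithContinuousLinearMaps

variable {R V : Type*} [Field R] [TopologicalSpace R]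
  [AddCommGroup V] [TopologicalSpace V] [Module R V] [ContinuousSMul R V] {T : V → V}

theorem map_smul_of_forall_commute
    (hcomm : ∀ X : V →L[R] V, ∀ v : V, T (X v) = X (T v)) (c : R) (v : V) : T (c • v) = c • T v :=
  hcomm (c • ContinuousLinearMap.id R V) v

theorem exists_eq_smul_of_forall_commute [SeparatingDual R V]
    (hcomm : ∀ X : V →L[R] V, ∀ v : V, T (X v) = X (T v)) :
    ∃ l : R, ∀ v : V, T v = l • v := by
  rcases subsingleton_or_nontrivial V with hV | hV
  · exact ⟨1, fun v => Subsingleton.elim _ _⟩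
  obtain ⟨e, he⟩ := exists_ne (0 : V)
  obtain ⟨f, hfe⟩ := SeparatingDual.exists_ne_zero (R := R) he
  refine ⟨(f e)⁻¹ * f (T e), fun w => ?_⟩
  have hrank_one : f e • T w = f (T e) • w := by
    simpa [map_smul_of_forall_commute hcomm] using hcomm (f.smulRight w) e
  rw [mul_smul, ← hrank_one, smul_smul, inv_mul_cancel₀ hfe, one_smul]

end CommuteWithContinuousLinearMaps

theorem stmt_15_general {H : Type*} [NormedAddCommGroup H] [InnerProductSpace ℂ H]
    (T : H → H)
    (hbij : Function.Bijective T)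
    (hcomm : ∀ X : H →L[ℂ] H, ∀ v : H, T (X v) = X (T v)) :
    ∃ l : ℂ, l ≠ 0 ∧ ∀ v : H, T v = l • v := by
  rcases subsingleton_or_nontrivial H with hH | hH
  · exact ⟨1, one_ne_zero, fun v => Subsingleton.elim _ _⟩
  obtain ⟨l, hl⟩ := exists_eq_smul_of_forall_commute hcomm
  refine ⟨l, fun hl0 => ?_, hl⟩
  obtain ⟨e, he⟩ := exists_ne (0 : H)
  exact he (hbij.injective (by simp [hl, hl0]))

theorem stmt_15 {H : Type*} [NormedAddCommGroup H] [InnerProductSpace ℂ H] [CompleteSpace H]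
    (T : H → H) (hadd : ∀ x y : H, T (x + y) = T x + T y)
    (hbij : Function.Bijective T)
    (hcomm : ∀ X : H →L[ℂ] H, ∀ v : H, T (X v) = X (T v)) :
    ∃ l : ℂ, l ≠ 0 ∧ ∀ v : H, T v = l • v :=
  stmt_15_general T hbij hcomm
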